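/- arXiv:1710.07282 — 2 statements merged into one kernel-verified Lean document; each statement's English description precedes it below -/
import Mathlib

section
/- If the random variables (Xᵢ)_{i=1}^M are i.i.d. in L^{2p}(Ω, V) and (X̄ᵢ)_{i=1}^M are i.i.d. in L^{2p}(Ω, V), then the sample covariances satisfy ‖Cov_M[X] − Cov_M[X̄]‖_{L^p(Ω, V⊗V)} ≤ 4 ‖X₁ − X̄₁‖_{L^{2p}(Ω,V)} (‖X₁‖_{L^{2p}(Ω,V)} + ‖X̄₁‖_{L^{2p}(Ω,V)}) · (M/(M−1)), where X̄ᵢ is coupled to Xᵢ on the same probability space. -/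
open MeasureTheory ProbabilityTheory
open scoped InnerProductSpace ENNReal

/-- Rank-one tensor `x ⊗ y`, realized as the operator `z ↦ ⟪y, z⟫ x`. -/
noncomputable def outerTensor {V : Type*} [NormedAddCommGroup V]
    [InnerProductSpace ℝ V] (x y : V) : V →L[ℝ] V :=
  (innerSL ℝ y).smulRight x

/-- Hilbert–Schmidt norm of `A : V → V` with respect to a Hilbert basis `b` of `V`. -/
noncomputable def hsNorm {ι V : Type*} [NormedAddCommGroup V]
    [InnerProductSpace ℝ V] (b : HilbertBasis ι ℝ V) (A : V →L[ℝ] V) : ℝ :=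
  Real.sqrt (∑' i, ‖A (b i)‖ ^ 2)

/-- Unbiased sample covariance `Cov_M[X] = (M/(M−1))(E_M[X ⊗ X] − E_M[X] ⊗ E_M[X])`
of an ensemble `X : Fin M → Ω → V`, evaluated at `ω`. -/
noncomputable def sampleCov {Ω V : Type*} [NormedAddCommGroup V]
    [InnerProductSpace ℝ V] {M : ℕ} (X : Fin M → Ω → V) (ω : Ω) : V →L[ℝ] V :=
  ((M : ℝ) / ((M : ℝ) - 1)) •
    ((M : ℝ)⁻¹ • ∑ i, outerTensor (X i ω) (X i ω)
      - outerTensor ((M : ℝ)⁻¹ • ∑ i, X i ω) ((M : ℝ)⁻¹ • ∑ i, X i ω))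

/-!
Since `x ⊗ x - y ⊗ y = (x - y) ⊗ x + y ⊗ (x - y)` and `‖x ⊗ y‖_HS = ‖x‖ ‖y‖`, the
Hilbert–Schmidt norm of `Cov_M[X] - Cov_M[X̄]` is bounded pointwise by `M/(M-1)` times the
sum of the ensemble average of `‖Xᵢ - X̄ᵢ‖ (‖Xᵢ‖ + ‖X̄ᵢ‖)` and the same product formed with the
ensemble means. Hölder's inequality with exponents `(2p, 2p)` bounds the `L^p` norm of every such
product by `‖X₁ - X̄₁‖_{2p} (‖X₁‖_{2p} + ‖X̄₁‖_{2p})`: for the summands because the pairs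
`(Xᵢ, X̄ᵢ)` are identically distributed, for the means by the triangle inequality in `L^{2p}`.
This gives the bound with the constant `2M/(M-1)`.
-/

noncomputable section HilbertSchmidt

variable {ι V : Type*} [NormedAddCommGroup V] [InnerProductSpace ℝ V] (b : HilbertBasis ι ℝ V)

lemma outerTensor_apply (x y z : V) : outerTensor x y z = ⟪y, z⟫_ℝ • x :=
  rfl

lemma hsNorm_eq_norm_of_apply_eq (A : V →L[ℝ] V) (f : lp (fun _ : ι => V) 2)
    (hf : ∀ i, A (b i) = f i) : hsNorm b A = ‖f‖ := by
  rw [hsNorm, lp.norm_eq_tsum_rpow (by norm_num) f, Real.sqrt_eq_rpow]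
  norm_num [hf]

lemma hasSum_norm_outerTensor_apply_sq (x y : V) :
    HasSum (fun i => ‖outerTensor x y (b i)‖ ^ 2) ((‖x‖ * ‖y‖) ^ 2) := by
  have h := (b.hasSum_inner_mul_inner y y).mul_right (‖x‖ ^ 2)
  rw [real_inner_self_eq_norm_sq, ← mul_pow, mul_comm ‖y‖] at h
  refine h.congr_fun fun i => ?_
  rw [outerTensor_apply, norm_smul, Real.norm_eq_abs, mul_pow, sq_abs,
    real_inner_comm (b i) y, sq]

/-- `hsNorm` is a `tsum` and has no triangle inequality of its own; on operators with
square-summable columns it is the `ℓ²(ι, V)` norm of the columns, which is where we compute. -/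
def outerTensorCols (x y : V) : lp (fun _ : ι => V) 2 :=
  ⟨fun i => outerTensor x y (b i),
    memℓp_gen (by simpa using (hasSum_norm_outerTensor_apply_sq b x y).summable)⟩

@[simp]
lemma outerTensorCols_apply (x y : V) (i : ι) :
    (outerTensorCols b x y : ι → V) i = ⟪y, b i⟫_ℝ • x :=
  rfl

lemma norm_outerTensorCols (x y : V) : ‖outerTensorCols b x y‖ = ‖x‖ * ‖y‖ := by
  rw [← hsNorm_eq_norm_of_apply_eq b (outerTensor x y) _ fun _ => rfl, hsNorm,
    (hasSum_norm_outerTensor_apply_sq b x y).tsum_eq, Real.sqrt_sq (by positivity)]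

lemma outerTensorCols_self_sub_self (x y : V) :
    outerTensorCols b x x - outerTensorCols b y y
      = outerTensorCols b (x - y) x + outerTensorCols b y (x - y) := by
  refine lp.ext (funext fun i => ?_)
  simp only [lp.coeFn_sub, lp.coeFn_add, Pi.sub_apply, Pi.add_apply, outerTensorCols_apply,
    inner_sub_left, sub_smul, smul_sub]
  abel

lemma norm_outerTensorCols_self_sub_self_le (x y : V) :
    ‖outerTensorCols b x x - outerTensorCols b y y‖ ≤ ‖x - y‖ * (‖x‖ + ‖y‖) := by
  rw [outerTensorCols_self_sub_self, mul_add]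
  refine (norm_add_le _ _).trans_eq ?_
  rw [norm_outerTensorCols, norm_outerTensorCols, mul_comm ‖y‖]

-- Also for `M = 1`, where the division by zero gives `0`.
lemma natCast_div_natCast_sub_one_nonneg (M : ℕ) : 0 ≤ (M : ℝ) / ((M : ℝ) - 1) := by
  rcases M with _ | M
  · simp
  · rw [Nat.cast_succ, add_sub_cancel_right]
    positivity

lemma hsNorm_sampleCov_sub_le {Ω : Type*} {M : ℕ} (X Y : Fin M → Ω → V) (ω : Ω) :
    hsNorm b (sampleCov X ω - sampleCov Y ω) ≤ (M : ℝ) / ((M : ℝ) - 1) *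
      ((M : ℝ)⁻¹ * ∑ i, ‖X i ω - Y i ω‖ * (‖X i ω‖ + ‖Y i ω‖)
        + ‖(M : ℝ)⁻¹ • ∑ i, (X i ω - Y i ω)‖
          * (‖(M : ℝ)⁻¹ • ∑ i, X i ω‖ + ‖(M : ℝ)⁻¹ • ∑ i, Y i ω‖)) := by
  set x := (M : ℝ)⁻¹ • ∑ i, X i ω
  set y := (M : ℝ)⁻¹ • ∑ i, Y i ω
  have hmean : (M : ℝ)⁻¹ • ∑ i, (X i ω - Y i ω) = x - y := by
    rw [Finset.sum_sub_distrib, smul_sub]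
  rw [hmean, hsNorm_eq_norm_of_apply_eq b _ (((M : ℝ) / ((M : ℝ) - 1)) •
    ((M : ℝ)⁻¹ • ∑ i, (outerTensorCols b (X i ω) (X i ω) - outerTensorCols b (Y i ω) (Y i ω))
      - (outerTensorCols b x x - outerTensorCols b y y)))]
  · rw [norm_smul, Real.norm_of_nonneg (natCast_div_natCast_sub_one_nonneg M)]
    refine mul_le_mul_of_nonneg_left ?_ (natCast_div_natCast_sub_one_nonneg M)
    refine (norm_sub_le _ _).trans (add_le_add ?_ (norm_outerTensorCols_self_sub_self_le b _ _))
    rw [norm_smul, Real.norm_of_nonneg (by positivity)]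
    gcongr
    exact (norm_sum_le _ _).trans
      (Finset.sum_le_sum fun i _ => norm_outerTensorCols_self_sub_self_le b _ _)
  · intro j
    simp only [sampleCov, sub_apply, smul_apply, sum_apply, outerTensor_apply, lp.coeFn_smul,
      lp.coeFn_sub, lp.coeFn_sum, Pi.smul_apply, Pi.sub_apply, Finset.sum_apply,
      outerTensorCols_apply]
    rw [Finset.sum_sub_distrib]
    module

end HilbertSchmidt

section Lp

variable {Ω : Type*} [MeasurableSpace Ω] {μ : Measure Ω}

lemma ENNReal.holderTriple_two_mul (r : ℝ≥0∞) : ENNReal.HolderTriple (2 * r) (2 * r) r := by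
  constructor
  rw [ENNReal.mul_inv (by simp) (by simp), ← add_mul, ENNReal.inv_two_add_inv_two, one_mul]

lemma eLpNorm_mul_le_mul_eLpNorm_two_mul {f g : Ω → ℝ} (hf : AEStronglyMeasurable f μ)
    (hg : AEStronglyMeasurable g μ) (r : ℝ≥0∞) :
    eLpNorm (f * g) r μ ≤ eLpNorm f (2 * r) μ * eLpNorm g (2 * r) μ :=
  eLpNorm_smul_le_mul_eLpNorm (φ := f) hg hf (hpqr := ENNReal.holderTriple_two_mul r)

lemma eLpNorm_inv_card_smul_sum_le {ι E : Type*} [Fintype ι] [NormedAddCommGroup E]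
    [NormedSpace ℝ E] {f : ι → Ω → E} {p : ℝ≥0∞} (hp : 1 ≤ p)
    (hf : ∀ i, AEStronglyMeasurable (f i) μ) {C : ℝ≥0∞} (hC : ∀ i, eLpNorm (f i) p μ ≤ C) :
    eLpNorm (fun ω => (Fintype.card ι : ℝ)⁻¹ • ∑ i, f i ω) p μ ≤ C := by
  rcases isEmpty_or_nonempty ι with hι | hι
  · simp
  have hsum : (fun ω => (Fintype.card ι : ℝ)⁻¹ • ∑ i, f i ω)
      = (Fintype.card ι : ℝ)⁻¹ • ∑ i, f i := by
    ext ω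
    simp
  rw [hsum, eLpNorm_const_smul]
  calc ‖(Fintype.card ι : ℝ)⁻¹‖ₑ * eLpNorm (∑ i, f i) p μ
      ≤ ‖(Fintype.card ι : ℝ)⁻¹‖ₑ * ∑ _i : ι, C := by
        gcongr
        exact (eLpNorm_sum_le (fun i _ => hf i) hp).trans (Finset.sum_le_sum fun i _ => hC i)
    _ = C := by
        simp [← mul_assoc, ENNReal.inv_mul_cancel]

lemma eLpNorm_norm_mul_norm_add_norm_le {E F : Type*} [NormedAddCommGroup E]
    [NormedAddCommGroup F] {f : Ω → E} {g h : Ω → F} (hf : AEStronglyMeasurable f μ)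
    (hg : AEStronglyMeasurable g μ) (hh : AEStronglyMeasurable h μ) {r : ℝ≥0∞}
    (hr : 1 ≤ 2 * r) :
    eLpNorm (fun ω => ‖f ω‖ * (‖g ω‖ + ‖h ω‖)) r μ
      ≤ eLpNorm f (2 * r) μ * (eLpNorm g (2 * r) μ + eLpNorm h (2 * r) μ) := by
  refine (eLpNorm_mul_le_mul_eLpNorm_two_mul hf.norm (hg.norm.add hh.norm) r).trans ?_
  rw [eLpNorm_norm]
  gcongr
  refine (eLpNorm_add_le hg.norm hh.norm hr).trans_eq ?_
  rw [eLpNorm_norm, eLpNorm_norm]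

lemma eLpNorm_hsNorm_sampleCov_sub_le {ι V : Type*} [NormedAddCommGroup V]
    [InnerProductSpace ℝ V] (b : HilbertBasis ι ℝ V) {M : ℕ} {X Y : Fin M → Ω → V}
    (hX : ∀ i, AEStronglyMeasurable (X i) μ) (hY : ∀ i, AEStronglyMeasurable (Y i) μ)
    {r : ℝ≥0∞} (hr : 1 ≤ r) {D A B : ℝ≥0∞} (hD : ∀ i, eLpNorm (X i - Y i) (2 * r) μ ≤ D)
    (hA : ∀ i, eLpNorm (X i) (2 * r) μ ≤ A) (hB : ∀ i, eLpNorm (Y i) (2 * r) μ ≤ B) :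
    eLpNorm (fun ω => hsNorm b (sampleCov X ω - sampleCov Y ω)) r μ
      ≤ 2 * ENNReal.ofReal ((M : ℝ) / ((M : ℝ) - 1)) * (D * (A + B)) := by
  have hr2 : 1 ≤ 2 * r := hr.trans (le_mul_of_one_le_left' one_le_two)
  have hXY i : AEStronglyMeasurable (X i - Y i) μ := (hX i).sub (hY i)
  set T₁ : Ω → ℝ := fun ω => (M : ℝ)⁻¹ * ∑ i, ‖X i ω - Y i ω‖ * (‖X i ω‖ + ‖Y i ω‖)
  set T₂ : Ω → ℝ := fun ω => ‖(M : ℝ)⁻¹ • ∑ i, (X i ω - Y i ω)‖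
    * (‖(M : ℝ)⁻¹ • ∑ i, X i ω‖ + ‖(M : ℝ)⁻¹ • ∑ i, Y i ω‖)
  have hT₁ : eLpNorm T₁ r μ ≤ D * (A + B) := by
    have hprod i : eLpNorm (fun ω => ‖X i ω - Y i ω‖ * (‖X i ω‖ + ‖Y i ω‖)) r μ
        ≤ D * (A + B) :=
      (eLpNorm_norm_mul_norm_add_norm_le (hXY i) (hX i) (hY i) hr2).trans
        (by gcongr; exacts [hD i, hA i, hB i])
    simpa using eLpNorm_inv_card_smul_sum_le hr (fun i => by fun_prop) hprod
  have hT₂ : eLpNorm T₂ r μ ≤ D * (A + B) := by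
    refine (eLpNorm_norm_mul_norm_add_norm_le (by fun_prop) (by fun_prop) (by fun_prop)
      hr2).trans ?_
    gcongr
    · simpa using eLpNorm_inv_card_smul_sum_le hr2 hXY hD
    · simpa using eLpNorm_inv_card_smul_sum_le hr2 hX hA
    · simpa using eLpNorm_inv_card_smul_sum_le hr2 hY hB
  have hc := natCast_div_natCast_sub_one_nonneg M
  calc eLpNorm (fun ω => hsNorm b (sampleCov X ω - sampleCov Y ω)) r μ
      ≤ eLpNorm (((M : ℝ) / ((M : ℝ) - 1)) • (T₁ + T₂)) r μ :=
        eLpNorm_mono_real fun ω => (Real.norm_of_nonneg (Real.sqrt_nonneg _)).trans_le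
          (hsNorm_sampleCov_sub_le b X Y ω)
    _ ≤ ENNReal.ofReal ((M : ℝ) / ((M : ℝ) - 1)) * (D * (A + B) + D * (A + B)) := by
        rw [eLpNorm_const_smul, Real.enorm_eq_ofReal hc]
        gcongr
        exact (eLpNorm_add_le (by fun_prop) (by fun_prop) hr).trans (add_le_add hT₁ hT₂)
    _ = 2 * ENNReal.ofReal ((M : ℝ) / ((M : ℝ) - 1)) * (D * (A + B)) := by ring

end Lp

/-- If `(Xᵢ)` and `(X̄ᵢ)` are i.i.d. ensembles in `L^{2p}(Ω,V)` coupled on the same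
probability space (the pairs `(Xᵢ, X̄ᵢ)` being i.i.d.), then
`‖Cov_M[X] − Cov_M[X̄]‖_{L^p(Ω,V⊗V)}
  ≤ 4 ‖X₁ − X̄₁‖_{L^{2p}} (‖X₁‖_{L^{2p}} + ‖X̄₁‖_{L^{2p}}) · M/(M−1)`. -/
theorem sample_covariance_ensemble_distance {Ω V ι : Type*} [MeasurableSpace Ω]
    {μ : Measure Ω}
    [NormedAddCommGroup V] [InnerProductSpace ℝ V]
    [SecondCountableTopology V] [MeasurableSpace V] [BorelSpace V]
    (b : HilbertBasis ι ℝ V) (p : ℝ) (hp : 2 ≤ p)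
    (M : ℕ) (hM : 2 ≤ M) (X Xb : Fin M → Ω → V)
    (hmeas : ∀ i, Measurable fun ω => (X i ω, Xb i ω))
    (hid : ∀ i j, IdentDistrib (fun ω => (X i ω, Xb i ω))
      (fun ω => (X j ω, Xb j ω)) μ μ) :
    eLpNorm (fun ω => hsNorm b (sampleCov X ω - sampleCov Xb ω))
        (ENNReal.ofReal p) μ
      ≤ ENNReal.ofReal (4 * (M : ℝ) / ((M : ℝ) - 1)) *
        (eLpNorm (fun ω => X ⟨0, by omega⟩ ω - Xb ⟨0, by omega⟩ ω)
            (ENNReal.ofReal (2 * p)) μ *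
          (eLpNorm (X ⟨0, by omega⟩) (ENNReal.ofReal (2 * p)) μ
            + eLpNorm (Xb ⟨0, by omega⟩) (ENNReal.ofReal (2 * p)) μ)) := by
  set i₀ : Fin M := ⟨0, by omega⟩
  have hp2 : ENNReal.ofReal (2 * p) = 2 * ENNReal.ofReal p := by
    rw [ENNReal.ofReal_mul zero_le_two, ENNReal.ofReal_ofNat]
  have hmoment {g : V × V → V} (hg : Measurable g) (i : Fin M) :
      eLpNorm (fun ω => g (X i ω, Xb i ω)) (2 * ENNReal.ofReal p) μ
        ≤ eLpNorm (fun ω => g (X i₀ ω, Xb i₀ ω)) (2 * ENNReal.ofReal p) μ :=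
    (((hid i i₀).comp hg).eLpNorm_eq _).le
  rw [hp2]
  refine (eLpNorm_hsNorm_sampleCov_sub_le b
    (fun i => (measurable_fst.comp (hmeas i)).aestronglyMeasurable)
    (fun i => (measurable_snd.comp (hmeas i)).aestronglyMeasurable)
    (ENNReal.one_le_ofReal.2 (by linarith))
    (hmoment (g := fun v => v.1 - v.2) (measurable_fst.sub measurable_snd))
    (hmoment (g := Prod.fst) measurable_fst) (hmoment (g := Prod.snd) measurable_snd)).trans ?_
  rw [mul_div_assoc, ENNReal.ofReal_mul zero_le_four, ENNReal.ofReal_ofNat]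
  gcongr
  norm_num
end

section
/- Let g(λ, s) = e^{−λs} + (1 − e^{−λs})/λ with λ ≥ λ₁ > 1, let Δt > 0, let T > 0, and let 1 < k with (k−1)·2Δt ≤ T, i.e. k ≤ T/(2Δt) + 1. Then |g(λ, Δt)^{2k} − g(λ, 2Δt)^k| ≤ ((1 + T²)/2) · Δt. -/
open Real

/-- Per-step amplification factor of the exponential Euler scheme. -/
noncomputable def gAmp (lam s : ℝ) : ℝ := Real.exp (-lam * s) + (1 - Real.exp (-lam * s)) / lam

/-!
Write `a = g(λ, Δt)`, `b = g(λ, 2Δt)` and `q = (1 - e^{-λΔt}) / λ ≤ Δt`. Then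
`a² = b - (λ - 1) q²` and `1 - b = (λ - 1) q (1 + e^{-λΔt})`, so `0 ≤ b - a² ≤ (1 - b) Δt`.
Convexity of `x ↦ x^k` gives `b^k - a^{2k} ≤ k b^{k-1} (b - a²) ≤ k b^{k-1} (1 - b) Δt`, and
`k b^{k-1} (1 - b) ≤ ((k - 1) / k)^{k-1} ≤ 1 / 2` for `k ≥ 2` by Bernoulli's inequality.
-/

lemma pow_sub_pow_le_mul_pow_mul_sub {x y : ℝ} (hx : 0 ≤ x) (hy : 0 ≤ y) (n : ℕ) :
    y ^ n - x ^ n ≤ n * y ^ (n - 1) * (y - x) := by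
  have := pow_add_mul_le_add_pow hy (b := x - y) (by linarith) n
  rw [add_sub_cancel] at this
  linarith

lemma two_mul_pow_self_le_add_one_pow {m : ℕ} (hm : m ≠ 0) :
    2 * (m : ℝ) ^ m ≤ (m + 1) ^ m := by
  have := pow_add_mul_le_add_pow (Nat.cast_nonneg m) (b := (1 : ℝ)) (by positivity) m
  rwa [mul_one, mul_pow_sub_one hm, ← two_mul] at this

lemma add_one_mul_pow_mul_one_sub_le_half {m : ℕ} (hm : m ≠ 0) {b : ℝ} (hb : 0 ≤ b) :
    (m + 1) * b ^ m * (1 - b) ≤ 1 / 2 := by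
  have hm0 : (0 : ℝ) < m := by positivity
  -- `c` maximises `x ↦ (m + 1) x ^ m (1 - x)`, with maximum `c ^ m`
  set c : ℝ := m / (m + 1) with hc
  have hc_mul : (m + 1) * c = m := by rw [hc]; field_simp
  have hcm : c ^ m ≤ 1 / 2 := by
    rw [hc, div_pow, div_le_iff₀ (by positivity)]
    linarith [two_mul_pow_self_le_add_one_pow hm]
  have tangent : m * b ^ m * (1 - b) ≤ c ^ (m + 1) := by
    have := pow_sub_pow_le_mul_pow_mul_sub (x := c) (by positivity) hb (m + 1)
    push_cast at this
    linear_combination this - b ^ m * hc_mul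
  refine le_of_mul_le_mul_left ?_ hm0
  calc (m : ℝ) * ((m + 1) * b ^ m * (1 - b)) = (m + 1) * (m * b ^ m * (1 - b)) := by ring
    _ ≤ (m + 1) * c ^ (m + 1) := by gcongr
    _ = ((m + 1) * c) * c ^ m := by ring
    _ = m * c ^ m := by rw [hc_mul]
    _ ≤ m * (1 / 2) := by gcongr

section gAmp

variable {lam s : ℝ}

lemma gAmp_two_mul :
    gAmp lam (2 * s) = exp (-lam * s) ^ 2 + (1 - exp (-lam * s) ^ 2) / lam := by
  rw [gAmp, ← exp_nat_mul]
  ring_nf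

lemma sq_gAmp (hlam : lam ≠ 0) :
    gAmp lam s ^ 2 = gAmp lam (2 * s) - (lam - 1) * ((1 - exp (-lam * s)) / lam) ^ 2 := by
  rw [gAmp_two_mul, gAmp]
  field_simp
  ring

lemma one_sub_gAmp_two_mul (hlam : lam ≠ 0) :
    1 - gAmp lam (2 * s) = (lam - 1) * ((1 - exp (-lam * s)) / lam) * (1 + exp (-lam * s)) := by
  rw [gAmp_two_mul]
  field_simp
  ring

lemma gAmp_nonneg (hlam : 1 ≤ lam) : 0 ≤ gAmp lam s := by
  have h : exp (-lam * s) / lam ≤ exp (-lam * s) := div_le_self (exp_pos _).le hlam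
  rw [gAmp, sub_div]
  linarith [one_div_pos.2 (zero_lt_one.trans_le hlam)]

lemma sq_gAmp_le_gAmp_two_mul (hlam : 1 ≤ lam) : gAmp lam s ^ 2 ≤ gAmp lam (2 * s) := by
  rw [sq_gAmp (by positivity)]
  have : 0 ≤ (lam - 1) * ((1 - exp (-lam * s)) / lam) ^ 2 := by
    have := sub_nonneg.2 hlam
    positivity
  linarith

lemma one_sub_exp_neg_mul_div_le (hlam : 0 < lam) : (1 - exp (-lam * s)) / lam ≤ s := by
  rw [div_le_iff₀ hlam]
  linarith [add_one_le_exp (-lam * s)]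

lemma gAmp_two_mul_sub_sq_le (hlam : 1 ≤ lam) (hs : 0 ≤ s) :
    gAmp lam (2 * s) - gAmp lam s ^ 2 ≤ (1 - gAmp lam (2 * s)) * s := by
  have hlam0 : lam ≠ 0 := by positivity
  rw [sq_gAmp hlam0, one_sub_gAmp_two_mul hlam0]
  set u := exp (-lam * s)
  set q := (1 - u) / lam
  have hu : 0 ≤ u := (exp_pos _).le
  have hq0 : 0 ≤ q := div_nonneg (sub_nonneg.2 (exp_le_one_iff.2 (by nlinarith))) (by positivity)
  have hqs : q ≤ s := one_sub_exp_neg_mul_div_le (by positivity)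
  have hlam1 : 0 ≤ lam - 1 := sub_nonneg.2 hlam
  calc gAmp lam (2 * s) - (gAmp lam (2 * s) - (lam - 1) * q ^ 2) = (lam - 1) * q * q := by ring
    _ ≤ (lam - 1) * q * ((1 + u) * s) := by gcongr; nlinarith
    _ = (lam - 1) * q * (1 + u) * s := by ring

end gAmp

theorem gAmp_pow_diff_bound_general (lam₁ lam Δt T : ℝ) (hlam₁ : 1 < lam₁) (hlam : lam₁ ≤ lam)
    (hΔt : 0 < Δt) (k : ℕ) (hk : 1 < k) :
    |gAmp lam Δt ^ (2 * k) - gAmp lam (2 * Δt) ^ k| ≤ (1 + T ^ 2) / 2 * Δt := by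
  have hlam1 : 1 ≤ lam := by linarith
  obtain ⟨m, rfl⟩ : ∃ m, k = m + 1 := ⟨k - 1, by omega⟩
  set a := gAmp lam Δt
  set b := gAmp lam (2 * Δt)
  have hb : 0 ≤ b := gAmp_nonneg hlam1
  rw [pow_mul, abs_sub_comm,
    abs_of_nonneg (sub_nonneg.2 (pow_le_pow_left₀ (sq_nonneg a) (sq_gAmp_le_gAmp_two_mul hlam1) _))]
  calc b ^ (m + 1) - (a ^ 2) ^ (m + 1) ≤ (m + 1) * b ^ m * (b - a ^ 2) := by
        simpa using pow_sub_pow_le_mul_pow_mul_sub (sq_nonneg a) hb (m + 1)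
    _ ≤ (m + 1) * b ^ m * ((1 - b) * Δt) := by
        gcongr
        exact gAmp_two_mul_sub_sq_le hlam1 hΔt.le
    _ = ((m + 1) * b ^ m * (1 - b)) * Δt := by ring
    _ ≤ 1 / 2 * Δt := by
        gcongr
        exact add_one_mul_pow_mul_one_sub_le_half (by omega) hb
    _ ≤ (1 + T ^ 2) / 2 * Δt := by gcongr; linarith [sq_nonneg T]

/-- For `λ ≥ λ₁ > 1`, `Δt > 0`, `T > 0` and `1 < k` with `(k−1)·2Δt ≤ T`:
`|g(λ,Δt)^{2k} − g(λ,2Δt)^k| ≤ ((1 + T²)/2) Δt`. -/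
theorem gAmp_pow_diff_bound (lam₁ lam Δt T : ℝ) (hlam₁ : 1 < lam₁) (hlam : lam₁ ≤ lam)
    (hΔt : 0 < Δt) (hT : 0 < T) (k : ℕ) (hk : 1 < k)
    (hkT : ((k : ℝ) - 1) * (2 * Δt) ≤ T) :
    |gAmp lam Δt ^ (2 * k) - gAmp lam (2 * Δt) ^ k| ≤ (1 + T ^ 2) / 2 * Δt :=
  gAmp_pow_diff_bound_general lam₁ lam Δt T hlam₁ hlam hΔt k hk
end
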